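/- arXiv:1910.07065 — 7 statements merged into one kernel-verified Lean document; each statement's English description precedes it below -/
import Mathlib

section
/- In a Cartesian differential category, axiom [CDC.4] (D[⟨f,g⟩] = ⟨D[f],D[g]⟩) follows from the other axioms [CDC.1-3] and [CDC.5]; in particular it follows from D[π₀] = π₁π₀, D[π₁] = π₁π₁, the chain rule D[fg] = ⟨π₀f, D[f]⟩D[g], and additivity of D. -/
universe u v

/-- A Cartesian left additive category, with composition written in diagrammatic order:
`comp f g` is "`f` followed by `g`". -/
structure CLACat where
  Obj : Type u
  Hom : Obj → Obj → Type v
  id : ∀ A, Hom A A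
  comp : ∀ {A B C}, Hom A B → Hom B C → Hom A C
  id_comp : ∀ {A B} (f : Hom A B), comp (id A) f = f
  comp_id : ∀ {A B} (f : Hom A B), comp f (id B) = f
  assoc : ∀ {A B C D} (f : Hom A B) (g : Hom B C) (h : Hom C D),
    comp (comp f g) h = comp f (comp g h)
  /-- chosen binary product on objects -/
  prod : Obj → Obj → Obj
  /-- first projection -/
  p0 : ∀ {A B}, Hom (prod A B) A
  /-- second projection -/
  p1 : ∀ {A B}, Hom (prod A B) B
  /-- pairing -/
  pair : ∀ {C A B}, Hom C A → Hom C B → Hom C (prod A B)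
  pair_p0 : ∀ {C A B} (f : Hom C A) (g : Hom C B), comp (pair f g) p0 = f
  pair_p1 : ∀ {C A B} (f : Hom C A) (g : Hom C B), comp (pair f g) p1 = g
  pair_unique : ∀ {C A B} (h : Hom C (prod A B)), pair (comp h p0) (comp h p1) = h
  /-- chosen terminal object -/
  one : Obj
  bang : ∀ A, Hom A one
  bang_unique : ∀ {A} (f : Hom A one), f = bang A
  /-- commutative monoid structure on each hom-set -/
  add : ∀ {A B}, Hom A B → Hom A B → Hom A B
  zero : ∀ {A B}, Hom A B
  add_assoc' : ∀ {A B} (f g h : Hom A B), add (add f g) h = add f (add g h)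
  add_comm' : ∀ {A B} (f g : Hom A B), add f g = add g f
  add_zero' : ∀ {A B} (f : Hom A B), add f zero = f
  /-- composition on the left preserves addition -/
  comp_add : ∀ {A B C} (x : Hom A B) (f g : Hom B C),
    comp x (add f g) = add (comp x f) (comp x g)
  comp_zero : ∀ {A B C} (x : Hom A B), comp x (zero : Hom B C) = (zero : Hom A C)
  /-- projections are additive -/
  add_comp_p0 : ∀ {C A B} (f g : Hom C (prod A B)),
    comp (add f g) p0 = add (comp f p0) (comp g p0)
  zero_comp_p0 : ∀ {C A B}, comp (zero : Hom C (prod A B)) p0 = (zero : Hom C A)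
  add_comp_p1 : ∀ {C A B} (f g : Hom C (prod A B)),
    comp (add f g) p1 = add (comp f p1) (comp g p1)
  zero_comp_p1 : ∀ {C A B}, comp (zero : Hom C (prod A B)) p1 = (zero : Hom C B)

namespace CLACat

variable (X : CLACat)

/-- first injection ι₀ := ⟨1,0⟩ : A → A×B -/
def i0 {A B : X.Obj} : X.Hom A (X.prod A B) := X.pair (X.id A) X.zero

/-- second injection ι₁ := ⟨0,1⟩ : B → A×B -/
def i1 {A B : X.Obj} : X.Hom B (X.prod A B) := X.pair X.zero (X.id B)

/-- the product map h×k -/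
def prodMap {A B C D : X.Obj} (h : X.Hom A B) (k : X.Hom C D) :
    X.Hom (X.prod A C) (X.prod B D) :=
  X.pair (X.comp X.p0 h) (X.comp X.p1 k)

/-- the exchange isomorphism ex := ⟨π₀×π₀, π₁×π₁⟩ -/
def ex {A B C D : X.Obj} :
    X.Hom (X.prod (X.prod A B) (X.prod C D)) (X.prod (X.prod A C) (X.prod B D)) :=
  X.pair (X.prodMap X.p0 X.p0) (X.prodMap X.p1 X.p1)

/-- a map is additive when precomposition with it preserves the additive structure -/
def Additive {A B : X.Obj} (h : X.Hom A B) : Prop :=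
  (∀ {C : X.Obj} (x y : X.Hom C A), X.comp (X.add x y) h = X.add (X.comp x h) (X.comp y h)) ∧
  (∀ {C : X.Obj}, X.comp (X.zero : X.Hom C A) h = X.zero)

end CLACat

/-- axiom [CDC.4] follows from [CDC.1], [CDC.3] and the chain rule [CDC.5]. -/
theorem cdc4_redundant (X : CLACat)
    (D : ∀ {A B : X.Obj}, X.Hom A B → X.Hom (X.prod A A) B)
    -- [CDC.1]
    (hD_add : ∀ {A B : X.Obj} (f g : X.Hom A B), D (X.add f g) = X.add (D f) (D g))
    (hD_zero : ∀ {A B : X.Obj}, D (X.zero : X.Hom A B) = X.zero)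
    -- [CDC.3]
    (hD_id : ∀ {A : X.Obj}, D (X.id A) = X.p1)
    (hD_p0 : ∀ {A B : X.Obj}, D (X.p0 : X.Hom (X.prod A B) A) = X.comp X.p1 X.p0)
    (hD_p1 : ∀ {A B : X.Obj}, D (X.p1 : X.Hom (X.prod A B) B) = X.comp X.p1 X.p1)
    -- [CDC.5], the chain rule
    (hD_comp : ∀ {A B C : X.Obj} (f : X.Hom A B) (g : X.Hom B C),
      D (X.comp f g) = X.comp (X.pair (X.comp X.p0 f) (D f)) (D g))
    {A B C : X.Obj} (f : X.Hom A B) (g : X.Hom A C) :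
    D (X.pair f g) = X.pair (D f) (D g) := by
  have h0 : X.comp (D (X.pair f g)) X.p0 = D f := by
    have := hD_comp (X.pair f g) (X.p0 : X.Hom (X.prod B C) B)
    rw [X.pair_p0, hD_p0, ← X.assoc, X.pair_p1] at this
    exact this.symm
  have h1 : X.comp (D (X.pair f g)) X.p1 = D g := by
    have := hD_comp (X.pair f g) (X.p1 : X.Hom (X.prod B C) C)
    rw [X.pair_p1, hD_p1, ← X.assoc, X.pair_p1] at this
    exact this.symm
  rw [← h0, ← h1, X.pair_unique]
end

section
/- In a Cartesian differential category, a map f : A → B is linear (i.e., D[f] = π₁f) if and only if ι₁D[f] = f, where ι₁ = ⟨0,1⟩ : A → A×A. -/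
universe u v

/-- The axioms of a Cartesian differential category, for a differential combinator `D`
on a Cartesian left additive category `X`. -/
structure CDCAxioms (X : CLACat)
    (D : ∀ {A B : X.Obj}, X.Hom A B → X.Hom (X.prod A A) B) : Prop where
  cdc1_add : ∀ {A B} (f g : X.Hom A B), D (X.add f g) = X.add (D f) (D g)
  cdc1_zero : ∀ {A B}, D (X.zero : X.Hom A B) = X.zero
  cdc2_add : ∀ {C A B} (a b c : X.Hom C A) (f : X.Hom A B),
    X.comp (X.pair a (X.add b c)) (D f)
      = X.add (X.comp (X.pair a b) (D f)) (X.comp (X.pair a c) (D f))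
  cdc2_zero : ∀ {C A B} (a : X.Hom C A) (f : X.Hom A B),
    X.comp (X.pair a X.zero) (D f) = X.zero
  cdc3_id : ∀ {A}, D (X.id A) = X.p1
  cdc3_p0 : ∀ {A B}, D (X.p0 : X.Hom (X.prod A B) A) = X.comp X.p1 X.p0
  cdc3_p1 : ∀ {A B}, D (X.p1 : X.Hom (X.prod A B) B) = X.comp X.p1 X.p1
  cdc4 : ∀ {A B C} (f : X.Hom A B) (g : X.Hom A C),
    D (X.pair f g) = X.pair (D f) (D g)
  cdc5 : ∀ {A B C} (f : X.Hom A B) (g : X.Hom B C),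
    D (X.comp f g) = X.comp (X.pair (X.comp X.p0 f) (D f)) (D g)
  cdc6 : ∀ {C A B} (a b c : X.Hom C A) (f : X.Hom A B),
    X.comp (X.pair (X.pair a b) (X.pair X.zero c)) (D (D f)) = X.comp (X.pair a c) (D f)
  cdc7 : ∀ {C A B} (a b c d : X.Hom C A) (f : X.Hom A B),
    X.comp (X.pair (X.pair a b) (X.pair c d)) (D (D f))
      = X.comp (X.pair (X.pair a c) (X.pair b d)) (D (D f))

namespace CLACat

/-- The forward differential combinator induced by a reverse differential combinator:
`D[f] := (⟨1,0⟩ × 1) R[R[f]] π₁`. -/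
def Dof (X : CLACat) (R : ∀ {A B : X.Obj}, X.Hom A B → X.Hom (X.prod A B) A)
    {A B : X.Obj} (f : X.Hom A B) : X.Hom (X.prod A A) B :=
  X.comp (X.prodMap X.i0 (X.id A)) (X.comp (R (R f)) X.p1)

/-- The dagger induced by a reverse differential combinator: `f† := ι₁ R[f]`. -/
def dag (X : CLACat) (R : ∀ {A B : X.Obj}, X.Hom A B → X.Hom (X.prod A B) A)
    {A B : X.Obj} (f : X.Hom A B) : X.Hom B A :=
  X.comp X.i1 (R f)

end CLACat

/-- The axioms of a Cartesian reverse differential category, for a reverse differential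
combinator `R` on a Cartesian left additive category `X`. -/
structure RDCAxioms (X : CLACat)
    (R : ∀ {A B : X.Obj}, X.Hom A B → X.Hom (X.prod A B) A) : Prop where
  rd1_add : ∀ {A B} (f g : X.Hom A B), R (X.add f g) = X.add (R f) (R g)
  rd1_zero : ∀ {A B}, R (X.zero : X.Hom A B) = X.zero
  rd2_add : ∀ {C A B} (a : X.Hom C A) (b c : X.Hom C B) (f : X.Hom A B),
    X.comp (X.pair a (X.add b c)) (R f)
      = X.add (X.comp (X.pair a b) (R f)) (X.comp (X.pair a c) (R f))
  rd2_zero : ∀ {C A B} (a : X.Hom C A) (f : X.Hom A B),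
    X.comp (X.pair a X.zero) (R f) = X.zero
  rd3_id : ∀ {A}, R (X.id A) = X.p1
  rd3_p0 : ∀ {A B}, R (X.p0 : X.Hom (X.prod A B) A) = X.comp X.p1 X.i0
  rd3_p1 : ∀ {A B}, R (X.p1 : X.Hom (X.prod A B) B) = X.comp X.p1 X.i1
  rd4 : ∀ {A B C} (f : X.Hom A B) (g : X.Hom A C),
    R (X.pair f g) = X.add (X.comp (X.prodMap (X.id A) X.p0) (R f))
                           (X.comp (X.prodMap (X.id A) X.p1) (R g))
  rd4_bang : ∀ {A}, R (X.bang A) = X.zero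
  rd5 : ∀ {A B C} (f : X.Hom A B) (g : X.Hom B C),
    R (X.comp f g) = X.comp (X.pair X.p0 (X.pair (X.comp X.p0 f) X.p1))
                            (X.comp (X.prodMap (X.id A) (R g)) (R f))
  rd6 : ∀ {A B} (f : X.Hom A B),
    X.comp (X.pair (X.prodMap (X.id A) X.p0) (X.prodMap (X.zero : X.Hom A A) X.p1))
      (X.comp (X.prodMap (X.i0 : X.Hom (X.prod A B) (X.prod (X.prod A B) A)) (X.id (X.prod A B)))
        (X.comp (R (R (R f))) X.p1))
    = X.comp (X.prodMap (X.id A) X.p1) (R f)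
  rd7 : ∀ {A B} (f : X.Hom A B),
    X.Dof (fun {_ _} g => R g) (X.Dof (fun {_ _} g => R g) f)
      = X.comp X.ex (X.Dof (fun {_ _} g => R g) (X.Dof (fun {_ _} g => R g) f))


theorem comp_pair_aux (X : CLACat) {Z C A B : X.Obj} (x : X.Hom Z C)
    (a : X.Hom C A) (b : X.Hom C B) :
    X.comp x (X.pair a b) = X.pair (X.comp x a) (X.comp x b) := by
  conv_lhs => rw [← X.pair_unique (X.comp x (X.pair a b))]
  rw [X.assoc, X.assoc, X.pair_p0, X.pair_p1]

/-- in a Cartesian differential category, `f` is linear (`D[f] = π₁ f`)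
iff `ι₁ D[f] = f`. -/
theorem linear_iff_i1_D (X : CLACat)
    (D : ∀ {A B : X.Obj}, X.Hom A B → X.Hom (X.prod A A) B)
    (hD : CDCAxioms X (fun {_ _} f => D f))
    {A B : X.Obj} (f : X.Hom A B) :
    D f = X.comp X.p1 f ↔ X.comp X.i1 (D f) = f := by
  constructor
  · intro h
    rw [h, ← X.assoc]
    have : X.comp (X.i1 : X.Hom A (X.prod A A)) X.p1 = X.id A := X.pair_p1 _ _
    rw [this, X.id_comp]
  · intro h
    have key : D f = D (X.comp X.i1 (D f)) := by rw [h]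
    rw [hD.cdc5] at key
    have hDi1 : D (X.i1 : X.Hom A (X.prod A A)) = X.pair X.zero X.p1 := by
      show D (X.pair X.zero (X.id A)) = _
      rw [hD.cdc4]
      exact congrArg₂ X.pair hD.cdc1_zero hD.cdc3_id
    have hp0i1 : X.comp (X.p0 : X.Hom (X.prod A A) A) (X.i1 : X.Hom A (X.prod A A))
        = X.pair X.zero X.p0 := by
      show X.comp X.p0 (X.pair X.zero (X.id A)) = _
      rw [comp_pair_aux, X.comp_zero, X.comp_id]
    rw [hp0i1, hDi1, hD.cdc6 X.zero X.p0 X.p1 f] at key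
    have : X.pair (X.zero : X.Hom (X.prod A A) A) X.p1
        = X.comp X.p1 X.i1 := by
      show _ = X.comp X.p1 (X.pair X.zero (X.id A))
      rw [comp_pair_aux, X.comp_zero, X.comp_id]
    rw [this, X.assoc, h] at key
    exact key
end

section
/- In a Cartesian differential category, the subcategory Lin(X) of linear maps has finite biproducts, given on objects by the product × of X, with projections π_i and injections ι₀ = ⟨1,0⟩, ι₁ = ⟨0,1⟩. -/
universe u v

namespace CLACat
/-- a map is linear when `D[f] = π₁ f` -/
def Linear (X : CLACat) (D : ∀ {A B : X.Obj}, X.Hom A B → X.Hom (X.prod A A) B)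
    {A B : X.Obj} (f : X.Hom A B) : Prop :=
  D f = X.comp X.p1 f
end CLACat

section Helpers

variable {X : CLACat} {D : ∀ {A B : X.Obj}, X.Hom A B → X.Hom (X.prod A A) B}

lemma comp_pair {C A B E : X.Obj} (x : X.Hom E C) (f : X.Hom C A) (g : X.Hom C B) :
    X.comp x (X.pair f g) = X.pair (X.comp x f) (X.comp x g) := by
  conv_lhs => rw [← X.pair_unique (X.comp x (X.pair f g))]
  rw [X.assoc, X.assoc, X.pair_p0, X.pair_p1]

lemma pair_comp_p1 {C A B E : X.Obj} (a : X.Hom C A) (b : X.Hom C B) (f : X.Hom B E) :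
    X.comp (X.pair a b) (X.comp X.p1 f) = X.comp b f := by
  rw [← X.assoc, X.pair_p1]

lemma linear_additive (hD : CDCAxioms X (fun {_ _} f => D f))
    {A B : X.Obj} (f : X.Hom A B) (hf : X.Linear (fun {_ _} f => D f) f) :
    X.Additive f := by
  have hf' : D f = X.comp X.p1 f := hf
  constructor
  · intro C x y
    have h := hD.cdc2_add (X.zero : X.Hom C A) x y f
    rwa [hf', pair_comp_p1, pair_comp_p1, pair_comp_p1] at h
  · intro C
    have h := hD.cdc2_zero (X.zero : X.Hom C A) f
    rwa [hf', pair_comp_p1] at h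

lemma zero_add' {A B : X.Obj} (f : X.Hom A B) : X.add X.zero f = f := by
  rw [X.add_comm', X.add_zero']

lemma i0_p0 {A B : X.Obj} : X.comp (X.i0 : X.Hom A (X.prod A B)) X.p0 = X.id A :=
  X.pair_p0 _ _

lemma i0_p1 {A B : X.Obj} : X.comp (X.i0 : X.Hom A (X.prod A B)) X.p1 = X.zero :=
  X.pair_p1 _ _

lemma i1_p0 {A B : X.Obj} : X.comp (X.i1 : X.Hom B (X.prod A B)) X.p0 = X.zero :=
  X.pair_p0 _ _

lemma i1_p1 {A B : X.Obj} : X.comp (X.i1 : X.Hom B (X.prod A B)) X.p1 = X.id B :=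
  X.pair_p1 _ _

lemma id_eq_add {A B : X.Obj} :
    X.id (X.prod A B) = X.add (X.comp X.p0 X.i0) (X.comp X.p1 X.i1) := by
  have h0 : X.comp (X.add (X.comp X.p0 (X.i0 : X.Hom A (X.prod A B))) (X.comp X.p1 X.i1)) X.p0
      = X.p0 := by
    rw [X.add_comp_p0, X.assoc, X.assoc, i0_p0, i1_p0, X.comp_id, X.comp_zero, X.add_zero']
  have h1 : X.comp (X.add (X.comp X.p0 (X.i0 : X.Hom A (X.prod A B))) (X.comp X.p1 X.i1)) X.p1
      = X.p1 := by
    rw [X.add_comp_p1, X.assoc, X.assoc, i0_p1, i1_p1, X.comp_id, X.comp_zero, zero_add']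
  have := X.pair_unique (X.add (X.comp X.p0 (X.i0 : X.Hom A (X.prod A B))) (X.comp X.p1 X.i1))
  rw [h0, h1] at this
  rw [← this, ← X.pair_unique (X.id (X.prod A B)), X.id_comp, X.id_comp]

end Helpers

/-- in a Cartesian differential category, the subcategory of linear maps
has finite biproducts given by the product `×` of `X`, with projections `πᵢ` and
injections `ι₀ = ⟨1,0⟩`, `ι₁ = ⟨0,1⟩`: identities and composites of linear maps are
linear, projections and injections are linear, zero maps and sums of linear maps are
linear, the terminal object is a zero object for linear maps, and `A × B` satisfies the
universal properties of a product and a coproduct within the linear maps. -/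
theorem lin_has_biproducts (X : CLACat)
    (D : ∀ {A B : X.Obj}, X.Hom A B → X.Hom (X.prod A A) B)
    (hD : CDCAxioms X (fun {_ _} f => D f)) :
    -- Lin(X) is a subcategory
    (∀ {A : X.Obj}, X.Linear (fun {_ _} f => D f) (X.id A)) ∧
    (∀ {A B C : X.Obj} (f : X.Hom A B) (g : X.Hom B C),
      X.Linear (fun {_ _} f => D f) f → X.Linear (fun {_ _} f => D f) g →
        X.Linear (fun {_ _} f => D f) (X.comp f g)) ∧
    -- additive structure restricts to linear maps
    (∀ {A B : X.Obj}, X.Linear (fun {_ _} f => D f) (X.zero : X.Hom A B)) ∧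
    (∀ {A B : X.Obj} (f g : X.Hom A B),
      X.Linear (fun {_ _} f => D f) f → X.Linear (fun {_ _} f => D f) g →
        X.Linear (fun {_ _} f => D f) (X.add f g)) ∧
    -- projections and injections are linear
    (∀ {A B : X.Obj}, X.Linear (fun {_ _} f => D f) (X.p0 : X.Hom (X.prod A B) A)) ∧
    (∀ {A B : X.Obj}, X.Linear (fun {_ _} f => D f) (X.p1 : X.Hom (X.prod A B) B)) ∧
    (∀ {A B : X.Obj}, X.Linear (fun {_ _} f => D f) (X.i0 : X.Hom A (X.prod A B))) ∧
    (∀ {A B : X.Obj}, X.Linear (fun {_ _} f => D f) (X.i1 : X.Hom B (X.prod A B))) ∧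
    -- the terminal object is a zero object in Lin(X)
    (∀ {A : X.Obj} (f : X.Hom A X.one), X.Linear (fun {_ _} f => D f) f → f = X.zero) ∧
    (∀ {A : X.Obj} (f : X.Hom X.one A), X.Linear (fun {_ _} f => D f) f → f = X.zero) ∧
    -- product universal property within linear maps
    (∀ {C A B : X.Obj} (f : X.Hom C A) (g : X.Hom C B),
      X.Linear (fun {_ _} f => D f) f → X.Linear (fun {_ _} f => D f) g →
        (X.Linear (fun {_ _} f => D f) (X.pair f g) ∧
          (∃! h : X.Hom C (X.prod A B), X.Linear (fun {_ _} f => D f) h ∧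
            X.comp h X.p0 = f ∧ X.comp h X.p1 = g))) ∧
    -- coproduct universal property within linear maps
    (∀ {A B C : X.Obj} (f : X.Hom A C) (g : X.Hom B C),
      X.Linear (fun {_ _} f => D f) f → X.Linear (fun {_ _} f => D f) g →
        ∃! h : X.Hom (X.prod A B) C, X.Linear (fun {_ _} f => D f) h ∧
          X.comp X.i0 h = f ∧ X.comp X.i1 h = g) := by
  have lin_id : ∀ {A : X.Obj}, X.Linear (fun {_ _} f => D f) (X.id A) := by
    intro A; show D _ = _; rw [hD.cdc3_id, X.comp_id]
  have lin_comp : ∀ {A B C : X.Obj} (f : X.Hom A B) (g : X.Hom B C),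
      X.Linear (fun {_ _} f => D f) f → X.Linear (fun {_ _} f => D f) g →
        X.Linear (fun {_ _} f => D f) (X.comp f g) := by
    intro A B C f g hf hg
    have hf' : D f = X.comp X.p1 f := hf
    have hg' : D g = X.comp X.p1 g := hg
    show D _ = _
    rw [hD.cdc5, hf', hg', pair_comp_p1, X.assoc]
  have lin_zero : ∀ {A B : X.Obj}, X.Linear (fun {_ _} f => D f) (X.zero : X.Hom A B) := by
    intro A B; show D _ = _; rw [hD.cdc1_zero, X.comp_zero]
  have lin_add : ∀ {A B : X.Obj} (f g : X.Hom A B),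
      X.Linear (fun {_ _} f => D f) f → X.Linear (fun {_ _} f => D f) g →
        X.Linear (fun {_ _} f => D f) (X.add f g) := by
    intro A B f g hf hg
    have hf' : D f = X.comp X.p1 f := hf
    have hg' : D g = X.comp X.p1 g := hg
    show D _ = _
    rw [hD.cdc1_add, hf', hg', X.comp_add]
  have lin_p0 : ∀ {A B : X.Obj}, X.Linear (fun {_ _} f => D f) (X.p0 : X.Hom (X.prod A B) A) :=
    fun {A B} => hD.cdc3_p0
  have lin_p1 : ∀ {A B : X.Obj}, X.Linear (fun {_ _} f => D f) (X.p1 : X.Hom (X.prod A B) B) :=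
    fun {A B} => hD.cdc3_p1
  have lin_pair : ∀ {C A B : X.Obj} (f : X.Hom C A) (g : X.Hom C B),
      X.Linear (fun {_ _} f => D f) f → X.Linear (fun {_ _} f => D f) g →
        X.Linear (fun {_ _} f => D f) (X.pair f g) := by
    intro C A B f g hf hg
    have hf' : D f = X.comp X.p1 f := hf
    have hg' : D g = X.comp X.p1 g := hg
    show D _ = _
    rw [hD.cdc4, hf', hg', comp_pair]
  have lin_i0 : ∀ {A B : X.Obj}, X.Linear (fun {_ _} f => D f) (X.i0 : X.Hom A (X.prod A B)) :=
    fun {A B} => lin_pair _ _ lin_id lin_zero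
  have lin_i1 : ∀ {A B : X.Obj}, X.Linear (fun {_ _} f => D f) (X.i1 : X.Hom B (X.prod A B)) :=
    fun {A B} => lin_pair _ _ lin_zero lin_id
  refine ⟨lin_id, lin_comp, lin_zero, lin_add, lin_p0, lin_p1, lin_i0, lin_i1, ?_, ?_, ?_, ?_⟩
  · intro A f _
    rw [X.bang_unique f, X.bang_unique (X.zero : X.Hom A X.one)]
  · intro A f hf
    have hid : X.id X.one = (X.zero : X.Hom X.one X.one) := by
      rw [X.bang_unique (X.id X.one), X.bang_unique (X.zero : X.Hom X.one X.one)]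
    calc f = X.comp (X.id X.one) f := (X.id_comp f).symm
    _ = X.comp X.zero f := by rw [hid]
    _ = X.zero := (linear_additive hD f hf).2
  · intro C A B f g hf hg
    refine ⟨lin_pair f g hf hg, X.pair f g,
      ⟨lin_pair f g hf hg, X.pair_p0 f g, X.pair_p1 f g⟩, ?_⟩
    rintro h ⟨-, h0, h1⟩
    rw [← X.pair_unique h, h0, h1]
  · intro A B C f g hf hg
    refine ⟨X.add (X.comp X.p0 f) (X.comp X.p1 g),
      ⟨lin_add _ _ (lin_comp _ _ lin_p0 hf) (lin_comp _ _ lin_p1 hg), ?_, ?_⟩, ?_⟩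
    · rw [X.comp_add, ← X.assoc, ← X.assoc, i0_p0, i0_p1, X.id_comp,
        (linear_additive hD g hg).2, X.add_zero']
    · rw [X.comp_add, ← X.assoc, ← X.assoc, i1_p0, i1_p1, X.id_comp,
        (linear_additive hD f hf).2, zero_add']
    · rintro h ⟨hlin, h0, h1⟩
      calc h = X.comp (X.id (X.prod A B)) h := (X.id_comp h).symm
      _ = X.comp (X.add (X.comp X.p0 X.i0) (X.comp X.p1 X.i1)) h := by rw [id_eq_add]
      _ = X.add (X.comp (X.comp X.p0 X.i0) h) (X.comp (X.comp X.p1 X.i1) h) :=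
          (linear_additive hD h hlin).1 _ _
      _ = X.add (X.comp X.p0 f) (X.comp X.p1 g) := by
          rw [X.assoc, X.assoc, h0, h1]
end

section
/- The category POLY_R of polynomial tuples over a commutative semiring R (objects natural numbers, morphisms n → m are m-tuples of polynomials in R[x₁,…,x_n]) is a Cartesian differential category, with differential combinator D[p](x⃗, y⃗) := Σᵢ (∂p/∂xᵢ)(x⃗)·yᵢ applied componentwise. -/
/-! `D[f]` evaluated at `⟨a, b⟩` is the directional derivative `Σᵢ (∂ᵢf)(a)·bᵢ`, so the axioms
become facts about partial derivatives of polynomials: linearity (CDC.1, CDC.2), `∂ᵢxⱼ = δᵢⱼ`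
(CDC.3) and the chain rule for substitution (CDC.5). Evaluating once more,
`D[D[f]]` at `⟨⟨a, b⟩, ⟨c, d⟩⟩` is `Σᵢₗ (∂ₗ∂ᵢf)(a)·bₗ·cᵢ + Σᵢ (∂ᵢf)(a)·dᵢ`: the first sum
vanishes at `c = 0` (CDC.6) and is symmetric in `b, c` because mixed partials commute (CDC.7). -/

universe u v

open MvPolynomial in
/-- The category `POLY_R` of polynomial tuples over a commutative semiring `R`:
objects are natural numbers, a map `n → m` is an `m`-tuple of polynomials in
`R[x₁,…,xₙ]`, composition is substitution, the product of objects is addition of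
natural numbers, and the additive structure is the sum of polynomials. -/
noncomputable def PolyCat (R : Type) [CommSemiring R] : CLACat where
  Obj := ℕ
  Hom n m := Fin m → MvPolynomial (Fin n) R
  id n := fun i => X i
  comp f g := fun j => aeval f (g j)
  id_comp f := by funext j; simp
  comp_id f := by funext j; simp
  assoc f g h := by
    funext j
    simp only []
    induction h j using MvPolynomial.induction_on with
    | C a => simp
    | add p q hp hq => simp_all
    | mul_X p i hp => simp_all
  prod n m := n + m
  p0 {n m} := fun i => X (Fin.castAdd m i)
  p1 {n m} := fun j => X (Fin.natAdd n j)
  pair f g := Fin.addCases f g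
  pair_p0 f g := by funext i; simp
  pair_p1 f g := by funext j; simp
  pair_unique h := by
    funext k
    induction k using Fin.addCases with
    | left i => simp
    | right j => simp
  one := 0
  bang n := Fin.elim0
  bang_unique f := by funext i; exact i.elim0
  add f g := fun j => f j + g j
  zero := fun _ => 0
  add_assoc' f g h := by funext j; ring
  add_comm' f g := by funext j; ring
  add_zero' f := by funext j; ring
  comp_add x f g := by funext j; simp
  comp_zero x := by funext j; simp
  add_comp_p0 f g := by funext i; simp
  zero_comp_p0 := by intro C A B; funext i; simp
  add_comp_p1 f g := by funext j; simp
  zero_comp_p1 := by intro C A B; funext j; simp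

open MvPolynomial in
/-- The differential combinator of `POLY_R`:
`D[p](x⃗,y⃗) := Σᵢ (∂p/∂xᵢ)(x⃗)·yᵢ`, componentwise. -/
noncomputable def polyD (R : Type) [CommSemiring R] {n m : ℕ}
    (f : Fin m → MvPolynomial (Fin n) R) :
    Fin m → MvPolynomial (Fin (n + n)) R :=
  fun j => ∑ i : Fin n,
    (rename (Fin.castAdd n) (pderiv i (f j))) * X (Fin.natAdd n i)

open MvPolynomial

namespace MvPolynomial

variable {R σ τ : Type*} [CommSemiring R]

theorem pderiv_pderiv_comm [DecidableEq σ] (i j : σ) (p : MvPolynomial σ R) :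
    pderiv i (pderiv j p) = pderiv j (pderiv i p) := by
  induction p using MvPolynomial.induction_on with
  | C a => simp
  | add p q hp hq => simp [hp, hq]
  | mul_X p k hp =>
    simp only [pderiv_mul, pderiv_X, Pi.single_apply, map_add, hp]
    split_ifs <;> simp [add_right_comm]

theorem pderiv_aeval [Fintype σ] (f : σ → MvPolynomial τ R) (p : MvPolynomial σ R) (u : τ) :
    pderiv u (aeval f p) = ∑ k, aeval f (pderiv k p) * pderiv u (f k) := by
  classical
  induction p using MvPolynomial.induction_on with
  | C a => simp
  | add p q hp hq => simp only [map_add, hp, hq, add_mul, Finset.sum_add_distrib]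
  | mul_X p i hp =>
    simp only [map_mul, aeval_X, pderiv_mul, hp, pderiv_X, Pi.single_apply, Finset.sum_mul,
      add_mul, map_add, Finset.sum_add_distrib]
    simp [add_comm, mul_right_comm]

end MvPolynomial

theorem Fin.castAdd_ne_natAdd {n m : ℕ} (i : Fin n) (j : Fin m) :
    Fin.castAdd m i ≠ Fin.natAdd n j := by
  simp only [ne_eq, Fin.ext_iff, Fin.val_castAdd, Fin.val_natAdd]
  omega

section PolyD

variable {R : Type} [CommSemiring R] {n m k : ℕ}

theorem aeval_addCases_rename_castAdd (a : Fin n → MvPolynomial (Fin k) R)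
    (b : Fin m → MvPolynomial (Fin k) R) (p : MvPolynomial (Fin n) R) :
    aeval (Fin.addCases a b) (rename (Fin.castAdd m) p) = aeval a p := by
  rw [aeval_rename]
  congr 1
  ext i
  simp

theorem pderiv_natAdd_rename_castAdd (p : MvPolynomial (Fin n) R) (i : Fin m) :
    pderiv (Fin.natAdd n i) (rename (Fin.castAdd m) p) = 0 := by
  refine pderiv_eq_zero_of_notMem_vars fun h => ?_
  obtain ⟨k, -, hk⟩ := Finset.mem_image.mp (vars_rename _ _ h)
  exact Fin.castAdd_ne_natAdd k i hk

theorem aeval_addCases_polyD (a b : Fin n → MvPolynomial (Fin k) R)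
    (f : Fin m → MvPolynomial (Fin n) R) (j : Fin m) :
    aeval (Fin.addCases a b) (polyD R f j) = ∑ i, aeval a (pderiv i (f j)) * b i := by
  simp only [polyD, map_sum, map_mul, aeval_addCases_rename_castAdd, aeval_X, Fin.addCases_right]

theorem aeval_addCases_add_polyD (a b c : Fin n → MvPolynomial (Fin k) R)
    (f : Fin m → MvPolynomial (Fin n) R) (j : Fin m) :
    aeval (Fin.addCases a (b + c)) (polyD R f j)
      = aeval (Fin.addCases a b) (polyD R f j) + aeval (Fin.addCases a c) (polyD R f j) := by
  simp only [aeval_addCases_polyD, Pi.add_apply, mul_add, Finset.sum_add_distrib]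

theorem aeval_addCases_zero_polyD (a : Fin n → MvPolynomial (Fin k) R)
    (f : Fin m → MvPolynomial (Fin n) R) (j : Fin m) :
    aeval (Fin.addCases a 0) (polyD R f j) = 0 := by
  simp only [aeval_addCases_polyD, Pi.zero_apply, mul_zero, Finset.sum_const_zero]

theorem polyD_add (f g : Fin m → MvPolynomial (Fin n) R) :
    polyD R (f + g) = polyD R f + polyD R g := by
  funext j
  simp [polyD, add_mul, Finset.sum_add_distrib]

theorem polyD_zero : polyD R (0 : Fin m → MvPolynomial (Fin n) R) = 0 := by
  funext j
  simp [polyD]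

theorem polyD_X_comp (g : Fin m → Fin n) :
    polyD R (fun j => X (g j)) = fun j => X (Fin.natAdd n (g j)) := by
  funext j
  simp [polyD, pderiv_X, Pi.single_apply]

theorem polyD_addCases (f : Fin m → MvPolynomial (Fin n) R)
    (g : Fin k → MvPolynomial (Fin n) R) :
    polyD R (Fin.addCases f g) = Fin.addCases (polyD R f) (polyD R g) := by
  funext l
  induction l using Fin.addCases <;> simp [polyD]

theorem polyD_comp (f : Fin m → MvPolynomial (Fin n) R) (g : Fin k → MvPolynomial (Fin m) R) :
    polyD R (fun j => aeval f (g j))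
      = fun j => aeval (Fin.addCases (fun i => rename (Fin.castAdd n) (f i)) (polyD R f))
          (polyD R g j) := by
  funext j
  rw [aeval_addCases_polyD]
  simp only [polyD, pderiv_aeval, map_sum, map_mul, Finset.sum_mul, Finset.mul_sum]
  rw [Finset.sum_comm]
  refine Finset.sum_congr rfl fun i _ => Finset.sum_congr rfl fun u _ => ?_
  rw [← comp_aeval_apply, mul_assoc]

theorem pderiv_castAdd_polyD (f : Fin m → MvPolynomial (Fin n) R) (j : Fin m) (i : Fin n) :
    pderiv (Fin.castAdd n i) (polyD R f j) = polyD R (fun j => pderiv i (f j)) j := by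
  simp only [polyD, map_sum, pderiv_mul, pderiv_rename (Fin.castAdd_injective n n)]
  refine Finset.sum_congr rfl fun l _ => ?_
  rw [pderiv_X_of_ne (Fin.castAdd_ne_natAdd i l).symm, mul_zero, add_zero, pderiv_pderiv_comm]

theorem pderiv_natAdd_polyD (f : Fin m → MvPolynomial (Fin n) R) (j : Fin m) (i : Fin n) :
    pderiv (Fin.natAdd n i) (polyD R f j) = rename (Fin.castAdd n) (pderiv i (f j)) := by
  simp only [polyD, map_sum, pderiv_mul, pderiv_natAdd_rename_castAdd, zero_mul, zero_add,
    pderiv_X, Pi.single_apply, Fin.natAdd_inj]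
  simp

theorem aeval_addCases_polyD_polyD (a b c d : Fin n → MvPolynomial (Fin k) R)
    (f : Fin m → MvPolynomial (Fin n) R) (j : Fin m) :
    aeval (Fin.addCases (Fin.addCases a b) (Fin.addCases c d)) (polyD R (polyD R f) j)
      = ∑ i, ∑ l, aeval a (pderiv l (pderiv i (f j))) * b l * c i
        + ∑ i, aeval a (pderiv i (f j)) * d i := by
  rw [aeval_addCases_polyD, Fin.sum_univ_add]
  simp only [Fin.addCases_left, Fin.addCases_right, pderiv_castAdd_polyD, pderiv_natAdd_polyD,
    aeval_addCases_polyD, aeval_addCases_rename_castAdd, Finset.sum_mul]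

theorem aeval_addCases_zero_polyD_polyD (a b c : Fin n → MvPolynomial (Fin k) R)
    (f : Fin m → MvPolynomial (Fin n) R) (j : Fin m) :
    aeval (Fin.addCases (Fin.addCases a b) (Fin.addCases 0 c)) (polyD R (polyD R f) j)
      = aeval (Fin.addCases a c) (polyD R f j) := by
  rw [aeval_addCases_polyD_polyD, aeval_addCases_polyD]
  simp only [Pi.zero_apply, mul_zero, Finset.sum_const_zero, zero_add]

theorem aeval_addCases_polyD_polyD_comm (a b c d : Fin n → MvPolynomial (Fin k) R)
    (f : Fin m → MvPolynomial (Fin n) R) (j : Fin m) :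
    aeval (Fin.addCases (Fin.addCases a b) (Fin.addCases c d)) (polyD R (polyD R f) j)
      = aeval (Fin.addCases (Fin.addCases a c) (Fin.addCases b d)) (polyD R (polyD R f) j) := by
  rw [aeval_addCases_polyD_polyD, aeval_addCases_polyD_polyD]
  congr 1
  rw [Finset.sum_comm]
  refine Finset.sum_congr rfl fun i _ => Finset.sum_congr rfl fun l _ => ?_
  rw [pderiv_pderiv_comm, mul_right_comm]

end PolyD

/-- `POLY_R` with the componentwise combinator
`D[p](x⃗,y⃗) = Σᵢ (∂p/∂xᵢ)(x⃗)yᵢ` is a Cartesian differential category. -/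
theorem polyCat_is_cdc (R : Type) [CommSemiring R] :
    CDCAxioms (PolyCat R) (fun {_ _} f => polyD R f) :=
  { cdc1_add := polyD_add
    cdc1_zero := polyD_zero
    cdc2_add a b c f := funext (aeval_addCases_add_polyD a b c f)
    cdc2_zero a f := funext (aeval_addCases_zero_polyD a f)
    cdc3_id := polyD_X_comp id
    cdc3_p0 {A B : ℕ} := (polyD_X_comp (Fin.castAdd B)).trans <|
      funext fun _ => (aeval_X (fun j => X (Fin.natAdd (A + B) j)) _).symm
    cdc3_p1 {A B : ℕ} := (polyD_X_comp (Fin.natAdd A)).trans <|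
      funext fun _ => (aeval_X (fun j => X (Fin.natAdd (A + B) j)) _).symm
    cdc4 := polyD_addCases
    cdc5 f g := by
      refine (polyD_comp f g).trans ?_
      simp only [rename_eq_aeval]
      rfl
    cdc6 a b c f := funext (aeval_addCases_zero_polyD_polyD a b c f)
    cdc7 a b c d f := funext (aeval_addCases_polyD_polyD_comm a b c d f) }
end

section
/- In a Cartesian reverse differential category with induced differential D[f] = (⟨1,0⟩×1)R[R[f]]π₁ and dagger f† := ι₁R[f], the following are equivalent for f : A → B: (1) f is linear (D[f] = π₁f); (2) ι₁(ι₀×1)R[R[f]]π₁ = f; (3) f†† = f. -/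
universe u v

/-!
Call `h` linear with transpose `h'` when `R[h] = π₁ h'`; identities, projections, `ι₁` and
products of linear maps are linear. By RD.5, composing with a linear map on either side acts
on `R` by reindexing only, so `f†† = ι₁ R[R[f]] π₁`, and `D[f††]` is a reindexing of `R⁴[f]`
which RD.6, applied to `R[f]`, reduces to `π₁ f††`: the double dagger is always linear.
Hence `f†† = f` forces linearity, while for linear `f`,
`ι₁ (ι₀×1) R[R[f]] π₁ = ι₁ D[f] = ι₁ π₁ f = f`.
-/

namespace CLACat

attribute [simp] id_comp comp_id assoc pair_p0 pair_p1 comp_zero zero_comp_p0 zero_comp_p1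
  comp_add add_comp_p0 add_comp_p1 add_zero' i0 i1 prodMap

variable {X : CLACat}

@[simp] theorem pair_p0_assoc {C A B D : X.Obj} (f : X.Hom C A) (g : X.Hom C B)
    (h : X.Hom A D) : X.comp (X.pair f g) (X.comp X.p0 h) = X.comp f h := by
  rw [← X.assoc, X.pair_p0]

@[simp] theorem pair_p1_assoc {C A B D : X.Obj} (f : X.Hom C A) (g : X.Hom C B)
    (h : X.Hom B D) : X.comp (X.pair f g) (X.comp X.p1 h) = X.comp g h := by
  rw [← X.assoc, X.pair_p1]

@[simp] theorem comp_pair {D C A B : X.Obj} (x : X.Hom D C) (f : X.Hom C A) (g : X.Hom C B) :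
    X.comp x (X.pair f g) = X.pair (X.comp x f) (X.comp x g) := by
  conv_lhs => rw [← X.pair_unique (X.comp x (X.pair f g))]
  rw [X.assoc, X.assoc, X.pair_p0, X.pair_p1]

@[simp] theorem comp_pair_assoc {D C A B E : X.Obj} (x : X.Hom D C) (f : X.Hom C A)
    (g : X.Hom C B) (h : X.Hom (X.prod A B) E) :
    X.comp x (X.comp (X.pair f g) h) = X.comp (X.pair (X.comp x f) (X.comp x g)) h := by
  rw [← X.assoc, comp_pair]

@[simp] theorem pair_zero_zero {C A B : X.Obj} :
    X.pair (X.zero : X.Hom C A) (X.zero : X.Hom C B) = X.zero := by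
  simpa using X.pair_unique (X.zero : X.Hom C (X.prod A B))

@[simp] theorem zero_add {A B : X.Obj} (f : X.Hom A B) : X.add X.zero f = f := by
  rw [X.add_comm', X.add_zero']

@[simp] theorem add_pair {C A B : X.Obj} (a c : X.Hom C A) (b d : X.Hom C B) :
    X.add (X.pair a b) (X.pair c d) = X.pair (X.add a c) (X.add b d) := by
  simpa using (X.pair_unique (X.add (X.pair a b) (X.pair c d))).symm

section
variable {R : ∀ {A B : X.Obj}, X.Hom A B → X.Hom (X.prod A B) A}
variable (hR : RDCAxioms X (fun {_ _} f => R f))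
include hR

theorem rev_comp_of_linear_left {A B C : X.Obj} {m : X.Hom A B} {m' : X.Hom B A}
    (hm : R m = X.comp X.p1 m') (g : X.Hom B C) :
    R (X.comp m g) = X.comp (X.prodMap m (X.id C)) (X.comp (R g) m') := by
  simp [hR.rd5, hm]

theorem rev_comp_of_linear_right {A B C : X.Obj} (k : X.Hom A B) {p : X.Hom B C} {p' : X.Hom C B}
    (hp : R p = X.comp X.p1 p') :
    R (X.comp k p) = X.comp (X.prodMap (X.id A) p') (R k) := by
  simp [hR.rd5, hp]

theorem rev_comp_comp_of_linear {A B C D : X.Obj} {m : X.Hom A B} {m' : X.Hom B A}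
    (hm : R m = X.comp X.p1 m') (k : X.Hom B C) {p : X.Hom C D} {p' : X.Hom D C}
    (hp : R p = X.comp X.p1 p') :
    R (X.comp m (X.comp k p))
      = X.comp (X.prodMap m (X.id D)) (X.comp (X.prodMap (X.id B) p') (X.comp (R k) m')) := by
  rw [rev_comp_of_linear_left hR hm, rev_comp_of_linear_right hR k hp]
  simp

theorem rev_comp_of_linear {A B C : X.Obj} {m : X.Hom A B} {m' : X.Hom B A}
    (hm : R m = X.comp X.p1 m') {g : X.Hom B C} {g' : X.Hom C B}
    (hg : R g = X.comp X.p1 g') :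
    R (X.comp m g) = X.comp X.p1 (X.comp g' m') := by
  simp [rev_comp_of_linear_left hR hm, hg]

theorem rev_pair_of_linear {A B C : X.Obj} {f : X.Hom A B} {f' : X.Hom B A}
    (hf : R f = X.comp X.p1 f') {g : X.Hom A C} {g' : X.Hom C A}
    (hg : R g = X.comp X.p1 g') :
    R (X.pair f g) = X.comp X.p1 (X.add (X.comp X.p0 f') (X.comp X.p1 g')) := by
  simp [hR.rd4, hf, hg]

theorem rev_id {A : X.Obj} : R (X.id A) = X.comp X.p1 (X.id A) := by
  simp [hR.rd3_id]

theorem rev_zero {A B : X.Obj} : R (X.zero : X.Hom A B) = X.comp X.p1 (X.zero : X.Hom B A) := by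
  simp [hR.rd1_zero]

theorem rev_i1 {A B : X.Obj} : R (X.i1 : X.Hom B (X.prod A B)) = X.comp X.p1 X.p1 := by
  simpa using rev_pair_of_linear hR (rev_zero hR) (rev_id hR)

theorem rev_prodMap_of_linear {A B C D : X.Obj} {h : X.Hom A B} {h' : X.Hom B A}
    (hh : R h = X.comp X.p1 h') {k : X.Hom C D} {k' : X.Hom D C}
    (hk : R k = X.comp X.p1 k') :
    R (X.prodMap h k) = X.comp X.p1 (X.prodMap h' k') := by
  simpa using rev_pair_of_linear hR (rev_comp_of_linear hR hR.rd3_p0 hh)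
    (rev_comp_of_linear hR hR.rd3_p1 hk)

theorem dag_dag {A B : X.Obj} (f : X.Hom A B) :
    X.dag (fun {_ _} g => R g) (X.dag (fun {_ _} g => R g) f)
      = X.comp X.i1 (X.comp (R (R f)) X.p1) := by
  simp only [dag, rev_comp_of_linear_left hR (rev_i1 hR)]
  simp

theorem dag_dag_linear {A B : X.Obj} (f : X.Hom A B) :
    X.Dof (fun {_ _} g => R g) (X.dag (fun {_ _} g => R g) (X.dag (fun {_ _} g => R g) f))
      = X.comp X.p1 (X.dag (fun {_ _} g => R g) (X.dag (fun {_ _} g => R g) f)) := by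
  have hRg : R (X.dag (fun {_ _} g => R g) (X.dag (fun {_ _} g => R g) f))
      = X.comp (X.comp (X.prodMap X.i1 (X.id B)) (X.prodMap (X.id _) X.i1))
          (X.comp (R (R (R f))) X.p1) := by
    rw [dag_dag hR, rev_comp_comp_of_linear hR (rev_i1 hR) _ hR.rd3_p1]
    simp only [assoc]
  have hM : R (X.comp (X.prodMap (X.i1 : X.Hom A (X.prod (X.prod A B) A)) (X.id B))
      (X.prodMap (X.id _) (X.i1 : X.Hom B (X.prod A B)))) = X.comp X.p1 _ :=
    rev_comp_of_linear hR (rev_prodMap_of_linear hR (rev_i1 hR) (rev_id hR))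
      (rev_prodMap_of_linear hR (rev_id hR) (rev_i1 hR))
  have hrd6 := congrArg (fun t => X.comp X.i1 (X.comp t X.p1)) (hR.rd6 (R f))
  rw [Dof, hRg, rev_comp_comp_of_linear hR hM _ hR.rd3_p1, dag_dag hR]
  simpa using hrd6

end

end CLACat

/-- in a Cartesian reverse differential category, with the induced
differential `D[f] = (⟨1,0⟩×1)R[R[f]]π₁` and dagger `f† := ι₁ R[f]`, the following are
equivalent: (1) `f` is linear; (2) `ι₁(ι₀×1)R[R[f]]π₁ = f`; (3) `f†† = f`. -/
theorem linear_tfae (X : CLACat)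
    (R : ∀ {A B : X.Obj}, X.Hom A B → X.Hom (X.prod A B) A)
    (hR : RDCAxioms X (fun {_ _} f => R f))
    {A B : X.Obj} (f : X.Hom A B) :
    (X.Dof (fun {_ _} g => R g) f = X.comp X.p1 f ↔
      X.comp X.i1 (X.comp (X.prodMap (X.i0 : X.Hom A (X.prod A B)) (X.id A))
        (X.comp (R (R f)) X.p1)) = f) ∧
    (X.comp X.i1 (X.comp (X.prodMap (X.i0 : X.Hom A (X.prod A B)) (X.id A))
        (X.comp (R (R f)) X.p1)) = f ↔
      X.dag (fun {_ _} g => R g) (X.dag (fun {_ _} g => R g) f) = f) := by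
  have h23 : X.comp X.i1 (X.comp (X.prodMap (X.i0 : X.Hom A (X.prod A B)) (X.id A))
      (X.comp (R (R f)) X.p1)) = X.dag (fun {_ _} g => R g) (X.dag (fun {_ _} g => R g) f) := by
    rw [CLACat.dag_dag hR]
    simp
  refine ⟨⟨fun hlin => ?_, fun h2 => ?_⟩, by rw [h23]⟩
  · change X.comp X.i1 (X.Dof (fun {_ _} g => R g) f) = f
    rw [hlin]
    simp
  · simpa only [← h23, h2] using CLACat.dag_dag_linear hR f
end

section
/- Every dagger category with finite dagger biproducts is a Cartesian reverse differential category, with reverse differential combinator R[f] := π₁f† : A⊕B → A for f : A → B. -/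
universe u v

/-- every dagger category with finite dagger biproducts is a Cartesian
reverse differential category with `R[f] := π₁ f†`.  A category with finite biproducts
is presented as a Cartesian left additive category in which every map is additive. -/
theorem dagger_biproducts_gives_rdc (X : CLACat)
    -- every map is additive, so the products of X are biproducts
    (hadd : ∀ {A B : X.Obj} (h : X.Hom A B), X.Additive h)
    -- the dagger structure
    (dagger : ∀ {A B : X.Obj}, X.Hom A B → X.Hom B A)
    (dagger_id : ∀ {A : X.Obj}, dagger (X.id A) = X.id A)
    (dagger_comp : ∀ {A B C : X.Obj} (f : X.Hom A B) (g : X.Hom B C),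
      dagger (X.comp f g) = X.comp (dagger g) (dagger f))
    (dagger_dagger : ∀ {A B : X.Obj} (f : X.Hom A B), dagger (dagger f) = f)
    -- dagger biproducts: πᵢ† = ιᵢ
    (dagger_p0 : ∀ {A B : X.Obj}, dagger (X.p0 : X.Hom (X.prod A B) A) = X.i0)
    (dagger_p1 : ∀ {A B : X.Obj}, dagger (X.p1 : X.Hom (X.prod A B) B) = X.i1) :
    RDCAxioms X (fun {_ _} f => X.comp X.p1 (dagger f)) := by
  -- abbreviations for additivity of all maps
  have add_comp : ∀ {A B C : X.Obj} (x y : X.Hom A B) (h : X.Hom B C),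
      X.comp (X.add x y) h = X.add (X.comp x h) (X.comp y h) := fun x y h => (hadd h).1 x y
  have zero_comp : ∀ {A B C : X.Obj} (h : X.Hom B C),
      X.comp (X.zero : X.Hom A B) h = X.zero := fun h => (hadd h).2
  have zero_add' : ∀ {A B : X.Obj} (f : X.Hom A B), X.add X.zero f = f := by
    intro A B f; rw [X.add_comm', X.add_zero']
  have comp_pair : ∀ {Z C A B : X.Obj} (h : X.Hom Z C) (u : X.Hom C A) (v : X.Hom C B),
      X.comp h (X.pair u v) = X.pair (X.comp h u) (X.comp h v) := by
    intro Z C A B h u v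
    conv_lhs => rw [← X.pair_unique (X.comp h (X.pair u v))]
    rw [X.assoc, X.assoc, X.pair_p0, X.pair_p1]
  have i0_p0 : ∀ {A B : X.Obj}, X.comp (X.i0 : X.Hom A (X.prod A B)) X.p0 = X.id A := by
    intro A B; simp only [CLACat.i0]; exact X.pair_p0 _ _
  have i0_p1 : ∀ {A B : X.Obj}, X.comp (X.i0 : X.Hom A (X.prod A B)) X.p1 = X.zero := by
    intro A B; simp only [CLACat.i0]; exact X.pair_p1 _ _
  have i1_p0 : ∀ {A B : X.Obj}, X.comp (X.i1 : X.Hom B (X.prod A B)) X.p0 = X.zero := by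
    intro A B; simp only [CLACat.i1]; exact X.pair_p0 _ _
  have i1_p1 : ∀ {A B : X.Obj}, X.comp (X.i1 : X.Hom B (X.prod A B)) X.p1 = X.id B := by
    intro A B; simp only [CLACat.i1]; exact X.pair_p1 _ _
  have dagger_i0 : ∀ {A B : X.Obj}, dagger (X.i0 : X.Hom A (X.prod A B)) = X.p0 := by
    intro A B; rw [← dagger_p0, dagger_dagger]
  have dagger_i1 : ∀ {A B : X.Obj}, dagger (X.i1 : X.Hom B (X.prod A B)) = X.p1 := by
    intro A B; rw [← dagger_p1, dagger_dagger]
  have dagger_zero : ∀ {A B : X.Obj}, dagger (X.zero : X.Hom A B) = X.zero := by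
    intro A B
    have h1 : (X.zero : X.Hom A B) = X.comp (X.i1 : X.Hom A (X.prod B A)) X.p0 :=
      i1_p0.symm
    rw [h1, dagger_comp, dagger_p0, dagger_i1, i0_p1]
  have id_decomp : ∀ {A B : X.Obj},
      X.id (X.prod A B) = X.add (X.comp X.p0 (X.i0 : X.Hom A (X.prod A B)))
        (X.comp X.p1 (X.i1 : X.Hom B (X.prod A B))) := by
    intro A B
    have hid : X.id (X.prod A B) = X.pair X.p0 X.p1 := by
      conv_lhs => rw [← X.pair_unique (X.id (X.prod A B))]
      rw [X.id_comp, X.id_comp]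
    have h0 : X.comp (X.add (X.comp X.p0 (X.i0 : X.Hom A (X.prod A B)))
        (X.comp X.p1 (X.i1 : X.Hom B (X.prod A B)))) X.p0 = X.p0 := by
      rw [X.add_comp_p0, X.assoc, X.assoc, i0_p0, i1_p0, X.comp_id, X.comp_zero, X.add_zero']
    have h1 : X.comp (X.add (X.comp X.p0 (X.i0 : X.Hom A (X.prod A B)))
        (X.comp X.p1 (X.i1 : X.Hom B (X.prod A B)))) X.p1 = X.p1 := by
      rw [X.add_comp_p1, X.assoc, X.assoc, i0_p1, i1_p1, X.comp_id, X.comp_zero, zero_add']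
    rw [hid, ← X.pair_unique (X.add (X.comp X.p0 (X.i0 : X.Hom A (X.prod A B)))
      (X.comp X.p1 (X.i1 : X.Hom B (X.prod A B)))), h0, h1]
  have jointEpi : ∀ {A B Z : X.Obj} (u v : X.Hom (X.prod A B) Z),
      X.comp X.i0 u = X.comp X.i0 v → X.comp X.i1 u = X.comp X.i1 v → u = v := by
    intro A B Z u v h0 h1
    have key : ∀ (w : X.Hom (X.prod A B) Z),
        w = X.add (X.comp X.p0 (X.comp X.i0 w)) (X.comp X.p1 (X.comp X.i1 w)) := by
      intro w
      conv_lhs => rw [← X.id_comp w, id_decomp, add_comp, X.assoc, X.assoc]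
    rw [key u, key v, h0, h1]
  have prodMap_p0 : ∀ {A B C D : X.Obj} (a : X.Hom A B) (b : X.Hom C D),
      X.comp (X.prodMap a b) X.p0 = X.comp X.p0 a := by
    intro A B C D a b; simp only [CLACat.prodMap]; exact X.pair_p0 _ _
  have prodMap_p1 : ∀ {A B C D : X.Obj} (a : X.Hom A B) (b : X.Hom C D),
      X.comp (X.prodMap a b) X.p1 = X.comp X.p1 b := by
    intro A B C D a b; simp only [CLACat.prodMap]; exact X.pair_p1 _ _
  have pair_comp_prodMap : ∀ {Z A B C D : X.Obj} (u : X.Hom Z A) (v : X.Hom Z C)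
      (a : X.Hom A B) (b : X.Hom C D),
      X.comp (X.pair u v) (X.prodMap a b) = X.pair (X.comp u a) (X.comp v b) := by
    intro Z A B C D u v a b
    rw [CLACat.prodMap, comp_pair, ← X.assoc, ← X.assoc, X.pair_p0, X.pair_p1]
  have comp_i0 : ∀ {Z A B : X.Obj} (f : X.Hom Z A),
      X.comp f (X.i0 : X.Hom A (X.prod A B)) = X.pair f X.zero := by
    intro Z A B f; rw [CLACat.i0, comp_pair, X.comp_id, X.comp_zero]
  have comp_i1 : ∀ {Z A B : X.Obj} (f : X.Hom Z B),
      X.comp f (X.i1 : X.Hom B (X.prod A B)) = X.pair X.zero f := by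
    intro Z A B f; rw [CLACat.i1, comp_pair, X.comp_id, X.comp_zero]
  have i0_prodMap : ∀ {A B C D : X.Obj} (a : X.Hom A B) (b : X.Hom C D),
      X.comp X.i0 (X.prodMap a b) = X.comp a X.i0 := by
    intro A B C D a b
    rw [CLACat.prodMap, comp_pair, ← X.assoc, ← X.assoc, i0_p0, i0_p1, X.id_comp,
      zero_comp, comp_i0]
  have i1_prodMap : ∀ {A B C D : X.Obj} (a : X.Hom A B) (b : X.Hom C D),
      X.comp X.i1 (X.prodMap a b) = X.comp b X.i1 := by
    intro A B C D a b
    rw [CLACat.prodMap, comp_pair, ← X.assoc, ← X.assoc, i1_p0, i1_p1, X.id_comp,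
      zero_comp, comp_i1]
  have dagger_delta : ∀ {A : X.Obj},
      dagger (X.pair (X.id A) (X.id A)) = X.add X.p0 X.p1 := by
    intro A
    apply jointEpi
    · rw [← dagger_p0, ← dagger_comp, X.pair_p0, dagger_id, dagger_p0,
        X.comp_add, i0_p0, i0_p1, X.add_zero']
    · rw [← dagger_p1, ← dagger_comp, X.pair_p1, dagger_id, dagger_p1,
        X.comp_add, i1_p0, i1_p1, zero_add']
  have dagger_nabla : ∀ {A : X.Obj},
      dagger (X.add (X.p0 : X.Hom (X.prod A A) A) X.p1) = X.pair (X.id A) (X.id A) := by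
    intro A; rw [← dagger_delta, dagger_dagger]
  have dagger_prodMap : ∀ {A B C D : X.Obj} (a : X.Hom A B) (b : X.Hom C D),
      dagger (X.prodMap a b) = X.prodMap (dagger a) (dagger b) := by
    intro A B C D a b
    apply jointEpi
    · rw [i0_prodMap, ← dagger_p0, ← dagger_comp, prodMap_p0, dagger_comp, dagger_p0]
    · rw [i1_prodMap, ← dagger_p1, ← dagger_comp, prodMap_p1, dagger_comp, dagger_p1]
  have add_decomp : ∀ {A B : X.Obj} (f g : X.Hom A B),
      X.add f g = X.comp (X.pair (X.id A) (X.id A))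
        (X.comp (X.prodMap f g) (X.add X.p0 X.p1)) := by
    intro A B f g
    rw [← X.assoc, pair_comp_prodMap, X.id_comp, X.id_comp, X.comp_add,
      X.pair_p0, X.pair_p1]
  have dagger_add : ∀ {A B : X.Obj} (f g : X.Hom A B),
      dagger (X.add f g) = X.add (dagger f) (dagger g) := by
    intro A B f g
    rw [add_decomp f g, dagger_comp, dagger_comp, dagger_delta, dagger_nabla,
      dagger_prodMap, X.assoc, ← add_decomp]
  have pair_decomp : ∀ {Z A B : X.Obj} (f : X.Hom Z A) (g : X.Hom Z B),
      X.pair f g = X.add (X.comp f (X.i0 : X.Hom A (X.prod A B)))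
        (X.comp g (X.i1 : X.Hom B (X.prod A B))) := by
    intro Z A B f g
    have h0 : X.comp (X.add (X.comp f (X.i0 : X.Hom A (X.prod A B)))
        (X.comp g (X.i1 : X.Hom B (X.prod A B)))) X.p0 = f := by
      rw [X.add_comp_p0, X.assoc, X.assoc, i0_p0, i1_p0, X.comp_id, X.comp_zero, X.add_zero']
    have h1 : X.comp (X.add (X.comp f (X.i0 : X.Hom A (X.prod A B)))
        (X.comp g (X.i1 : X.Hom B (X.prod A B)))) X.p1 = g := by
      rw [X.add_comp_p1, X.assoc, X.assoc, i0_p1, i1_p1, X.comp_id, X.comp_zero, zero_add']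
    rw [← X.pair_unique (X.add (X.comp f (X.i0 : X.Hom A (X.prod A B)))
      (X.comp g (X.i1 : X.Hom B (X.prod A B)))), h0, h1]
  have dagger_pair : ∀ {Z A B : X.Obj} (f : X.Hom Z A) (g : X.Hom Z B),
      dagger (X.pair f g) = X.add (X.comp X.p0 (dagger f)) (X.comp X.p1 (dagger g)) := by
    intro Z A B f g
    rw [pair_decomp, dagger_add, dagger_comp, dagger_comp, dagger_i0, dagger_i1]
  refine { rd1_add := ?_, rd1_zero := ?_, rd2_add := ?_, rd2_zero := ?_, rd3_id := ?_,
           rd3_p0 := ?_, rd3_p1 := ?_, rd4 := ?_, rd4_bang := ?_, rd5 := ?_,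
           rd6 := ?_, rd7 := ?_ }
  · intro A B f g
    rw [dagger_add, X.comp_add]
  · intro A B
    rw [dagger_zero, X.comp_zero]
  · intro C A B a b c f
    rw [← X.assoc, ← X.assoc, ← X.assoc, X.pair_p1, X.pair_p1, X.pair_p1, add_comp]
  · intro C A B a f
    rw [← X.assoc, X.pair_p1, zero_comp]
  · intro A
    rw [dagger_id, X.comp_id]
  · intro A B
    rw [dagger_p0]
  · intro A B
    rw [dagger_p1]
  · intro A B C f g
    rw [dagger_pair, X.comp_add,
      ← X.assoc (X.prodMap (X.id A) X.p0) X.p1 (dagger f),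
      ← X.assoc (X.prodMap (X.id A) X.p1) X.p1 (dagger g),
      prodMap_p1, prodMap_p1,
      ← X.assoc X.p1 X.p0 (dagger f), ← X.assoc X.p1 X.p1 (dagger g)]
  · intro A
    rw [show X.bang A = X.zero from (X.bang_unique X.zero).symm, dagger_zero, X.comp_zero]
  · intro A B C f g
    rw [dagger_comp]
    have e1 : X.comp (X.pair (X.p0 : X.Hom (X.prod A C) A) (X.pair (X.comp X.p0 f) X.p1))
        (X.prodMap (X.id A) (X.comp X.p1 (dagger g)))
        = X.pair X.p0 (X.comp X.p1 (dagger g)) := by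
      rw [pair_comp_prodMap, X.comp_id,
        ← X.assoc (X.pair (X.comp X.p0 f) X.p1) X.p1 (dagger g), X.pair_p1]
    conv_rhs => rw [← X.assoc, e1, ← X.assoc, X.pair_p1]
    rw [← X.assoc]
  · intro A B f
    have h1 : dagger (X.comp X.p1 (dagger f)) = X.comp f (X.i1 : X.Hom B (X.prod A B)) := by
      rw [dagger_comp, dagger_dagger, dagger_p1]
    have h2 : dagger (X.comp (X.p1 : X.Hom (X.prod (X.prod A B) A) A)
          (X.comp f (X.i1 : X.Hom B (X.prod A B)))) =
        X.comp (X.comp X.p1 (dagger f)) (X.i1 : X.Hom A (X.prod (X.prod A B) A)) := by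
      rw [dagger_comp, dagger_comp, dagger_i1, dagger_p1, X.assoc]
    rw [h1, h2]
    rw [X.assoc X.p1 (X.comp (X.comp X.p1 (dagger f)) X.i1) X.p1,
      X.assoc (X.comp X.p1 (dagger f)) X.i1 X.p1, i1_p1, X.comp_id,
      ← X.assoc (X.prodMap X.i0 (X.id (X.prod A B))) X.p1, prodMap_p1, X.comp_id,
      ← X.assoc (X.pair (X.prodMap (X.id A) X.p0)
        (X.prodMap (X.zero : X.Hom A A) X.p1)) X.p1, X.pair_p1,
      ← X.assoc (X.prodMap (X.zero : X.Hom A A) X.p1) X.p1 (dagger f), prodMap_p1,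
      ← X.assoc (X.prodMap (X.id A) X.p1) X.p1 (dagger f), prodMap_p1]
  · intro A B f
    have Dsimp : ∀ {A B : X.Obj} (f : X.Hom A B),
        X.Dof (fun {_ _} g => X.comp X.p1 (dagger g)) f = X.comp X.p1 f := by
      intro A B f
      have h1 : dagger (X.comp X.p1 (dagger f)) = X.comp f (X.i1 : X.Hom B (X.prod A B)) := by
        rw [dagger_comp, dagger_dagger, dagger_p1]
      show X.comp (X.prodMap X.i0 (X.id A))
          (X.comp (X.comp X.p1 (dagger (X.comp X.p1 (dagger f)))) X.p1) = X.comp X.p1 f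
      rw [h1, X.assoc, X.assoc, i1_p1, X.comp_id, ← X.assoc, prodMap_p1, X.comp_id]
    rw [Dsimp, Dsimp]
    conv_rhs => rw [← X.assoc, CLACat.ex, X.pair_p1, ← X.assoc, prodMap_p1]
    rw [← X.assoc]
end

section
/- In a Cartesian reverse differential category, for any f : A → B the reverse derivative R[f] : A×B → A is linear in B with respect to the induced differential combinator D[g] := (⟨1,0⟩×1)R[R[g]]π₁; equivalently, (⟨ι₀,0⟩×ι₁) R[R[R[f]]] π₁ = R[f]. -/
universe u v

/-- in a Cartesian reverse differential category, for any `f : A → B`,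
the reverse derivative `R[f] : A×B → A` is linear in `B` with respect to the induced
differential combinator, i.e. its partial derivative `⟨1×π₀, 0×π₁⟩ D[R[f]]` equals
`(1×π₁) R[f]`; equivalently, `(⟨ι₀,0⟩ × ι₁) R[R[R[f]]] π₁ = R[f]`. -/
theorem reverse_linear_in_second (X : CLACat)
    (R : ∀ {A B : X.Obj}, X.Hom A B → X.Hom (X.prod A B) A)
    (hR : RDCAxioms X (fun {_ _} f => R f))
    {A B : X.Obj} (f : X.Hom A B) :
    -- R[f] is linear in B: D_B[R[f]] = (1 × π₁) R[f]
    (X.comp (X.pair (X.prodMap (X.id A) X.p0) (X.prodMap (X.zero : X.Hom A A) X.p1))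
        (X.Dof (fun {_ _} g => R g) (R f))
      = X.comp (X.prodMap (X.id A) X.p1) (R f)) ∧
    -- equivalently, (⟨ι₀,0⟩ × ι₁) R[R[R[f]]] π₁ = R[f]
    (X.comp (X.prodMap
        (X.pair (X.i0 : X.Hom A (X.prod A B)) (X.zero : X.Hom A A))
        (X.i1 : X.Hom B (X.prod A B)))
      (X.comp (R (R (R f))) X.p1) = R f) := by
  have comp_pair : ∀ {C D A' B' : X.Obj} (x : X.Hom C D) (u : X.Hom D A') (v : X.Hom D B'),
      X.comp x (X.pair u v) = X.pair (X.comp x u) (X.comp x v) := by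
    intro C D A' B' x u v
    rw [← X.pair_unique (X.comp x (X.pair u v)), X.assoc, X.assoc, X.pair_p0, X.pair_p1]
  have pair_p0' : ∀ {C A' B' E : X.Obj} (u : X.Hom C A') (v : X.Hom C B') (h : X.Hom A' E),
      X.comp (X.pair u v) (X.comp X.p0 h) = X.comp u h := by
    intro _ _ _ _ u v h; rw [← X.assoc, X.pair_p0]
  have pair_p1' : ∀ {C A' B' E : X.Obj} (u : X.Hom C A') (v : X.Hom C B') (h : X.Hom B' E),
      X.comp (X.pair u v) (X.comp X.p1 h) = X.comp v h := by
    intro _ _ _ _ u v h; rw [← X.assoc, X.pair_p1]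
  have comp_pair' : ∀ {C D A' B' E : X.Obj} (x : X.Hom C D) (u : X.Hom D A') (v : X.Hom D B')
      (w : X.Hom (X.prod A' B') E),
      X.comp x (X.comp (X.pair u v) w) = X.comp (X.pair (X.comp x u) (X.comp x v)) w := by
    intro _ _ _ _ _ x u v w; rw [← X.assoc, comp_pair]
  have pair_id : ∀ {A' B' : X.Obj}, X.pair (X.p0 : X.Hom (X.prod A' B') A') X.p1 = X.id _ := by
    intro A' B'
    rw [← X.pair_unique (X.id _), X.id_comp, X.id_comp]
  have h1 := hR.rd6 f
  constructor
  · exact h1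
  · have h2 := congrArg
      (X.comp (X.pair (X.p0 : X.Hom (X.prod A B) A)
        (X.pair (X.zero : X.Hom (X.prod A B) B) X.p1))) h1
    simp only [CLACat.Dof, CLACat.prodMap, CLACat.i0, CLACat.i1, comp_pair, comp_pair', pair_p0', pair_p1',
      CLACat.assoc, CLACat.pair_p0, CLACat.pair_p1, CLACat.comp_zero, CLACat.comp_id,
      CLACat.id_comp, CLACat.zero_comp_p0, CLACat.zero_comp_p1, pair_id] at h2 ⊢
    exact h2
end
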